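/- arXiv:math/0203151 — 2 statements merged into one kernel-verified Lean document; each statement's English description precedes it below -/
import Mathlib

section
/- Let Π be a profinite group, Γ ⊴ Π a closed normal subgroup with quotient p : Π → π, and suppose p admits a continuous section. Let G be a finite group and X a right torsor under the constant group G in continuous Π-sets, with associated homomorphism θ : Π → G' = Aut_G(X) assumed surjective. Then X is isomorphic, as a right G-torsor in Π-sets, to a contracted product Y ∧ Z where: Z is a right G-torsor in Π-sets on which Γ acts trivially (i.e. Z comes from a π-set), and Y is a bitorsor whose class comes by extension of structure group from a torsor under a quotient of Γ whose underlying group embeds into G. -/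
/-!
Twisting `ρ` by the splitting, `ρ' = ρ ∘ s ∘ p`, gives a `P`-action on the same `G`-torsor on
which `Γ = ker p` acts trivially. Since `σ * (s (p σ))⁻¹ ∈ Γ` and `Γ` is normal, the subgroup
`H' = ρ(Γ)` of `Aut_G(X)` is stable under the twisted action `f ↦ ρ σ * f * (ρ' σ)⁻¹`.
As `G` acts simply transitively on `X` and commutes with `Aut_G(X)`, evaluation at a base
point `x₀` embeds `Aut_G(X)` into `G`.
-/

section RightTorsor

variable {X G : Type*}

/-- `Aut_G(X)`, for the right action `r` of `G` on `X`. -/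
def equivariantPerms (r : X → G → X) : Subgroup (Equiv.Perm X) where
  carrier := {f | ∀ x g, f (r x g) = r (f x) g}
  mul_mem' {f f'} hf hf' x g := by
    change f (f' (r x g)) = r (f (f' x)) g
    rw [hf', hf]
  one_mem' _ _ := rfl
  inv_mem' {f} hf x g := f.injective <| by
    change f (f⁻¹ (r x g)) = f (r (f⁻¹ x) g)
    rw [hf, Equiv.Perm.coe_inv, Equiv.apply_symm_apply, Equiv.apply_symm_apply]

variable {r : X → G → X} (hr : ∀ x y, ∃! g, r x g = y)

noncomputable def torsorCoord (x₀ y : X) : G :=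
  (hr x₀ y).choose

theorem apply_torsorCoord (x₀ y : X) : r x₀ (torsorCoord hr x₀ y) = y :=
  (hr x₀ y).choose_spec.1

theorem torsorCoord_eq {x₀ y : X} {g : G} (h : r x₀ g = y) : torsorCoord hr x₀ y = g :=
  ((hr x₀ y).choose_spec.2 g h).symm

variable [Group G] (r_mul : ∀ x g h, r x (g * h) = r (r x g) h)

noncomputable def equivariantPermsToGroup (x₀ : X) : equivariantPerms r →* G :=
  MonoidHom.mk' (fun f => torsorCoord hr x₀ ((f : Equiv.Perm X) x₀)) fun f f' =>
    torsorCoord_eq hr <| by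
      rw [r_mul, apply_torsorCoord hr, ← f.2, apply_torsorCoord hr, Subgroup.coe_mul,
        Equiv.Perm.mul_apply]

theorem equivariantPermsToGroup_apply (x₀ : X) (f : equivariantPerms r) :
    equivariantPermsToGroup hr r_mul x₀ f = torsorCoord hr x₀ ((f : Equiv.Perm X) x₀) :=
  rfl

theorem equivariantPermsToGroup_injective (x₀ : X) :
    Function.Injective (equivariantPermsToGroup hr r_mul x₀) := by
  intro f f' hff'
  have hx₀ : (f : Equiv.Perm X) x₀ = (f' : Equiv.Perm X) x₀ := by
    rw [equivariantPermsToGroup_apply, equivariantPermsToGroup_apply] at hff'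
    rw [← apply_torsorCoord hr x₀ ((f : Equiv.Perm X) x₀), hff', apply_torsorCoord hr]
  refine Subtype.ext <| Equiv.ext fun y => ?_
  rw [← apply_torsorCoord hr x₀ y, f.2, f'.2, hx₀]

end RightTorsor

theorem MonoidHom.mul_inv_section_mem_ker {P Q : Type*} [Group P] [Group Q] {p : P →* Q}
    {s : Q → P} (hsect : ∀ y, p (s y) = y) (σ : P) : σ * (s (p σ))⁻¹ ∈ p.ker := by
  rw [MonoidHom.mem_ker, map_mul, map_inv, hsect, mul_inv_cancel]

theorem Subgroup.mul_mul_inv_mem_map {P H : Type*} [Group P] [Group H] {K : Subgroup P}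
    [K.Normal] (ρ : P →* H) {t : P → P} (ht : ∀ σ, σ * (t σ)⁻¹ ∈ K) (σ : P) {f : H}
    (hf : f ∈ K.map ρ) : ρ σ * f * (ρ (t σ))⁻¹ ∈ K.map ρ := by
  obtain ⟨k, hk, rfl⟩ := hf
  refine ⟨σ * k * σ⁻¹ * (σ * (t σ)⁻¹), mul_mem (Normal.conj_mem ‹_› k hk σ) (ht σ), ?_⟩
  simp only [map_mul, map_inv]
  group

theorem devissage_of_constant_torsor_general
    {P Pi G X : Type*}
    [Group P] [TopologicalSpace P]
    [Group Pi] [TopologicalSpace Pi]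
    [Group G]
    (p : P →* Pi) (hpcont : Continuous p)
    (s : Pi →* P) (hscont : Continuous s) (hsect : ∀ y : Pi, p (s y) = y)
    (ρ : P →* Equiv.Perm X) (hρcont : ∀ x y : X, IsOpen {σ : P | ρ σ x = y})
    (r : X → G → X) (hne : Nonempty X)
    (r_mul : ∀ x g h, r x (g * h) = r (r x g) h)
    (r_free_trans : ∀ x y, ∃! g, r x g = y)
    (hcomm : ∀ σ x g, ρ σ (r x g) = r (ρ σ x) g) :
    ∃ ρ' : P →* Equiv.Perm X,
      (∀ x y : X, IsOpen {σ : P | ρ' σ x = y}) ∧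
      (∀ σ x g, ρ' σ (r x g) = r (ρ' σ x) g) ∧
      (∀ γ ∈ p.ker, ρ' γ = 1) ∧
      (∃ W : Set (Equiv.Perm X),
        W.Nonempty ∧
        (∀ f ∈ W, ∀ x g, f (r x g) = r (f x) g) ∧
        (∀ σ : P, ∀ f ∈ W, ρ σ * f * (ρ' σ)⁻¹ ∈ W) ∧
        (∀ f ∈ W, ∀ γ ∈ p.ker, ρ γ * f ∈ W) ∧
        (∀ f ∈ W, ∀ f' ∈ W, ∃ γ ∈ p.ker, f' = ρ γ * f)) ∧
      (∃ j : Equiv.Perm X → G,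
        (∀ f f' : Equiv.Perm X, (∀ x g, f (r x g) = r (f x) g) →
          (∀ x g, f' (r x g) = r (f' x) g) → j (f * f') = j f * j f') ∧
        (∀ f f' : Equiv.Perm X, (∀ x g, f (r x g) = r (f x) g) →
          (∀ x g, f' (r x g) = r (f' x) g) → j f = j f' → f = f')) := by
  obtain ⟨x₀⟩ := hne
  let j := equivariantPermsToGroup r_free_trans r_mul x₀
  have hj (f : Equiv.Perm X) (hf : f ∈ equivariantPerms r) :
      j ⟨f, hf⟩ = torsorCoord r_free_trans x₀ (f x₀) :=
    equivariantPermsToGroup_apply _ _ _ _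
  refine ⟨ρ.comp (s.comp p), fun x y => (hρcont x y).preimage (hscont.comp hpcont),
    fun σ => hcomm (s (p σ)), fun γ hγ => ?_,
    ⟨p.ker.map ρ, ⟨1, one_mem _⟩, ?_, fun σ f hf => ?_, fun f hf γ hγ => ?_, fun f hf f' hf' => ?_⟩,
    ⟨fun f => torsorCoord r_free_trans x₀ (f x₀), fun f f' hf hf' => ?_,
      fun f f' hf hf' hff' => ?_⟩⟩
  · change ρ (s (p γ)) = 1
    rw [MonoidHom.mem_ker.mp hγ, map_one, map_one]
  · rintro f ⟨γ, -, rfl⟩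
    exact hcomm γ
  · exact Subgroup.mul_mul_inv_mem_map ρ (p.mul_inv_section_mem_ker hsect) σ hf
  · exact mul_mem (Subgroup.mem_map_of_mem ρ hγ) hf
  · obtain ⟨γ, hγ, hγf⟩ := mul_mem hf' (inv_mem hf)
    exact ⟨γ, hγ, by rw [hγf, inv_mul_cancel_right]⟩
  · dsimp only
    rw [← hj f hf, ← hj f' hf', ← hj _ (mul_mem hf hf')]
    exact map_mul j ⟨f, hf⟩ ⟨f', hf'⟩
  · dsimp only at hff'
    rw [← hj f hf, ← hj f' hf'] at hff'
    exact congrArg Subtype.val <| equivariantPermsToGroup_injective r_free_trans r_mul x₀ hff'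

/-- dévissage theorem: let `P` be a profinite group, `p : P → π` a continuous
surjection (with closed normal kernel `Γ = ker p`) admitting a continuous homomorphic
section `s`, `G` a finite group and `X` a right torsor under the constant group `G` in
continuous `P`-sets, with `P`-action `ρ : P →* Perm X` commuting with the `G`-action;
assume the associated homomorphism `θ : P → G' = Aut_G(X)` is surjective (i.e. every
`G`-equivariant permutation of `X` is some `ρ σ`).  Then `X` decomposes as a contracted
product `Y ∧ Z`: there is a second continuous `P`-action `ρ'` on `X`, still commuting with
the `G`-action (defining the torsor `Z`, with the same underlying `G`-torsor as `X`), on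
which `Γ` acts trivially (so `Z` comes from a `π`-set), and the bitorsor
`Y = Isom_G(Z, X)` (the `G`-equivariant permutations of `X`, with `P` acting by
`σ·f = ρ(σ) ∘ f ∘ ρ'(σ)⁻¹`) is induced from a torsor `W` under the subgroup
`H' = θ(Γ) = ρ(Γ)` of `Aut_G(X)` — a `P`-stable, `H'`-stable and `H'`-transitive nonempty
set of equivariant permutations — where `Aut_G(X)` (hence `H'`, a quotient of `Γ`) embeds
into `G`. -/
theorem devissage_of_constant_torsor
    {P Pi G X : Type*}
    [Group P] [TopologicalSpace P] [IsTopologicalGroup P]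
    [CompactSpace P] [TotallyDisconnectedSpace P]
    [Group Pi] [TopologicalSpace Pi] [IsTopologicalGroup Pi]
    [CompactSpace Pi] [TotallyDisconnectedSpace Pi]
    [Group G] [Finite G]
    (p : P →* Pi) (hpsurj : Function.Surjective p) (hpcont : Continuous p)
    (s : Pi →* P) (hscont : Continuous s) (hsect : ∀ y : Pi, p (s y) = y)
    (ρ : P →* Equiv.Perm X) (hρcont : ∀ x y : X, IsOpen {σ : P | ρ σ x = y})
    (r : X → G → X) (hne : Nonempty X)
    (r_one : ∀ x, r x 1 = x) (r_mul : ∀ x g h, r x (g * h) = r (r x g) h)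
    (r_free_trans : ∀ x y, ∃! g, r x g = y)
    (hcomm : ∀ σ x g, ρ σ (r x g) = r (ρ σ x) g)
    (hθsurj : ∀ f : Equiv.Perm X, (∀ x g, f (r x g) = r (f x) g) → ∃ σ : P, ρ σ = f) :
    ∃ ρ' : P →* Equiv.Perm X,
      (∀ x y : X, IsOpen {σ : P | ρ' σ x = y}) ∧
      (∀ σ x g, ρ' σ (r x g) = r (ρ' σ x) g) ∧
      (∀ γ ∈ p.ker, ρ' γ = 1) ∧
      (∃ W : Set (Equiv.Perm X),
        W.Nonempty ∧
        (∀ f ∈ W, ∀ x g, f (r x g) = r (f x) g) ∧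
        (∀ σ : P, ∀ f ∈ W, ρ σ * f * (ρ' σ)⁻¹ ∈ W) ∧
        (∀ f ∈ W, ∀ γ ∈ p.ker, ρ γ * f ∈ W) ∧
        (∀ f ∈ W, ∀ f' ∈ W, ∃ γ ∈ p.ker, f' = ρ γ * f)) ∧
      (∃ j : Equiv.Perm X → G,
        (∀ f f' : Equiv.Perm X, (∀ x g, f (r x g) = r (f x) g) →
          (∀ x g, f' (r x g) = r (f' x) g) → j (f * f') = j f * j f') ∧
        (∀ f f' : Equiv.Perm X, (∀ x g, f (r x g) = r (f x) g) →
          (∀ x g, f' (r x g) = r (f' x) g) → j f = j f' → f = f')) :=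
  devissage_of_constant_torsor_general p hpcont s hscont hsect ρ hρcont r hne r_mul r_free_trans
    hcomm
end

section
/- Let (G', X, G) and (G'', Y, G) be right G-bitorsors of sets, H ⊴ G a normal subgroup, and H' ⊆ G', H'' ⊆ G'' the normal subgroups canonically corresponding to H via X and Y respectively. If there is a G/H-equivariant bijection X/H → Y/H, then the (G'', G')-bitorsor Isom_G(X, Y) is obtained by extension of structure group from an (H'', H')-bitorsor: there exist an (H'',H')-bitorsor W and a morphism of bitorsors (H'', W, H') → (G'', Isom_G(X,Y), G') whose group homomorphisms are the inclusions. -/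
/-- A `(G', G)`-bitorsor structure on a set `X`, given by a left action map `l` of `G'`
and a right action map `r` of `G`: both actions are free and transitive (each expressed
as unique existence) and they commute with each other. -/
structure IsBitorsor (G' G X : Type*) [Group G'] [Group G]
    (l : G' → X → X) (r : X → G → X) : Prop where
  nonempty : Nonempty X
  l_one : ∀ x, l 1 x = x
  l_mul : ∀ a b x, l (a * b) x = l a (l b x)
  r_one : ∀ x, r x 1 = x
  r_mul : ∀ x g h, r x (g * h) = r (r x g) h
  l_free_trans : ∀ x y, ∃! a, l a x = y
  r_free_trans : ∀ x y, ∃! g, r x g = y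
  comm : ∀ a x g, l a (r x g) = r (l a x) g

/-- The relation on `X` whose quotient is `X/H` (orbits of the right action of `H ≤ G`). -/
def rightOrbitRel {X G : Type*} [Group G] (r : X → G → X) (H : Subgroup G) : X → X → Prop :=
  fun x y => ∃ h ∈ H, r x h = y

lemma rightOrbitRel_equivalence {X G : Type*} [Group G] (r : X → G → X) (H : Subgroup G)
    (r_one : ∀ x, r x 1 = x) (r_mul : ∀ x g h, r x (g * h) = r (r x g) h) :
    Equivalence (rightOrbitRel r H) := by
  constructor
  · exact fun x => ⟨1, H.one_mem, r_one x⟩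
  · rintro x y ⟨h, hh, rfl⟩
    exact ⟨h⁻¹, H.inv_mem hh, by rw [← r_mul, mul_inv_cancel, r_one]⟩
  · rintro x y z ⟨h, hh, rfl⟩ ⟨k, hk, rfl⟩
    exact ⟨h * k, H.mul_mem hh hk, r_mul x h k⟩

/-- LemIsomQuot: let `(G', X, G)` and `(G'', Y, G)` be right `G`-bitorsors of
sets, `H ⊴ G` normal, and `H' ⊆ G'`, `H'' ⊆ G''` the normal subgroups canonically
corresponding to `H` via `X` and `Y`.  If there is a `G/H`-equivariant bijection
`X/H → Y/H`, then the `(G'', G')`-bitorsor `Isom_G(X, Y)` is obtained by extension of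
structure group from an `(H'', H')`-bitorsor: there is a nonempty subset `W` of
`Isom_G(X, Y)` stable under postcomposition by `H''` and precomposition by `H'`, on which
these actions are transitive. -/
theorem isomG_from_subgroup_bitorsor {G' G G'' X Y : Type*} [Group G'] [Group G] [Group G'']
    (lX : G' → X → X) (rX : X → G → X) (lY : G'' → Y → Y) (rY : Y → G → Y)
    (hX : IsBitorsor G' G X lX rX) (hY : IsBitorsor G'' G Y lY rY)
    (H : Subgroup G) [H.Normal]
    (H' : Subgroup G') (hH' : H'.Normal)
    (hcorrX : ∀ x y : X, (∃ a ∈ H, rX x a = y) ↔ (∃ b ∈ H', lX b x = y))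
    (H'' : Subgroup G'') (hH'' : H''.Normal)
    (hcorrY : ∀ x y : Y, (∃ a ∈ H, rY x a = y) ↔ (∃ b ∈ H'', lY b x = y))
    (hiso : ∃ e : Quot (rightOrbitRel rX H) ≃ Quot (rightOrbitRel rY H),
      ∀ (x : X) (g : G) (y : Y),
        e (Quot.mk _ x) = Quot.mk _ y →
        e (Quot.mk _ (rX x g)) = Quot.mk _ (rY y g)) :
    ∃ W : Set {f : X → Y // Function.Bijective f ∧ ∀ x g, f (rX x g) = rY (f x) g},
      W.Nonempty ∧
      (∀ u ∈ W, ∀ b ∈ H'', ∃ v ∈ W, ∀ x, v.1 x = lY b (u.1 x)) ∧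
      (∀ u ∈ W, ∀ a ∈ H', ∃ v ∈ W, ∀ x, v.1 x = u.1 (lX a x)) ∧
      (∀ u ∈ W, ∀ v ∈ W, ∃ b ∈ H'', ∀ x, v.1 x = lY b (u.1 x)) ∧
      (∀ u ∈ W, ∀ v ∈ W, ∃ a ∈ H', ∀ x, v.1 x = u.1 (lX a x)) := by
  obtain ⟨e, he⟩ := hiso
  have eqvX := rightOrbitRel_equivalence rX H hX.r_one hX.r_mul
  have eqvY := rightOrbitRel_equivalence rY H hY.r_one hY.r_mul
  have mkX_eq : ∀ x y : X, Quot.mk (rightOrbitRel rX H) x = Quot.mk _ y ↔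
      ∃ h ∈ H, rX x h = y := by
    intro x y
    rw [Quot.eq]
    exact eqvX.eqvGen_iff
  have mkY_eq : ∀ x y : Y, Quot.mk (rightOrbitRel rY H) x = Quot.mk _ y ↔
      ∃ h ∈ H, rY x h = y := by
    intro x y
    rw [Quot.eq]
    exact eqvY.eqvGen_iff
  set W : Set {f : X → Y // Function.Bijective f ∧ ∀ x g, f (rX x g) = rY (f x) g} :=
    {u | ∀ x, e (Quot.mk _ x) = Quot.mk _ (u.1 x)} with hW
  refine ⟨W, ?_, ?_, ?_, ?_, ?_⟩
  · -- nonemptiness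
    obtain ⟨x₀⟩ := hX.nonempty
    obtain ⟨y₀, hy₀⟩ := Quot.exists_rep (e (Quot.mk _ x₀))
    -- σ x : the unique g with rX x₀ g = x
    have hσ := fun x => (hX.r_free_trans x₀ x)
    set σ : X → G := fun x => (hσ x).choose with hσdef
    have σ_spec : ∀ x, rX x₀ (σ x) = x := fun x => (hσ x).choose_spec.1
    have σ_uniq : ∀ x g, rX x₀ g = x → g = σ x := fun x g h => (hσ x).choose_spec.2 g h
    set f : X → Y := fun x => rY y₀ (σ x) with hfdef
    have fequiv : ∀ x g, f (rX x g) = rY (f x) g := by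
      intro x g
      have h1 : σ (rX x g) = σ x * g := by
        refine (σ_uniq _ _ ?_).symm
        rw [hX.r_mul, σ_spec]
      simp only [hfdef, h1, hY.r_mul]
    have fbij : Function.Bijective f := by
      constructor
      · intro x y hxy
        have : σ x = σ y := (hY.r_free_trans y₀ (f y)).unique hxy rfl
        rw [← σ_spec x, ← σ_spec y, this]
      · intro y
        obtain ⟨g, hg, -⟩ := hY.r_free_trans y₀ y
        refine ⟨rX x₀ g, ?_⟩
        have : σ (rX x₀ g) = g := (σ_uniq _ _ rfl).symm
        simp only [hfdef, this, hg]
    refine ⟨⟨f, fbij, fequiv⟩, ?_⟩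
    intro x
    have hx : x = rX x₀ (σ x) := (σ_spec x).symm
    calc e (Quot.mk _ x) = e (Quot.mk _ (rX x₀ (σ x))) := by rw [← hx]
      _ = Quot.mk _ (rY y₀ (σ x)) := he x₀ (σ x) y₀ hy₀.symm
      _ = Quot.mk _ (f x) := rfl
  · -- stability under postcomposition by H''
    intro u hu b hb
    have lYb_bij : Function.Bijective (lY b) := by
      constructor
      · intro y z hyz
        have := congrArg (lY b⁻¹) hyz
        rwa [← hY.l_mul, ← hY.l_mul, inv_mul_cancel, hY.l_one, hY.l_one] at this
      · intro y
        exact ⟨lY b⁻¹ y, by rw [← hY.l_mul, mul_inv_cancel, hY.l_one]⟩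
    refine ⟨⟨fun x => lY b (u.1 x), lYb_bij.comp u.2.1, ?_⟩, ?_, fun x => rfl⟩
    · intro x g
      show lY b (u.1 (rX x g)) = rY (lY b (u.1 x)) g
      rw [u.2.2, hY.comm]
    · intro x
      obtain ⟨h, hh, hhe⟩ := (hcorrY (u.1 x) (lY b (u.1 x))).mpr ⟨b, hb, rfl⟩
      have : Quot.mk (rightOrbitRel rY H) (u.1 x) = Quot.mk _ (lY b (u.1 x)) :=
        (mkY_eq _ _).mpr ⟨h, hh, hhe⟩
      rw [← this]
      exact hu x
  · -- stability under precomposition by H'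
    intro u hu a ha
    have lXa_bij : Function.Bijective (lX a) := by
      constructor
      · intro y z hyz
        have := congrArg (lX a⁻¹) hyz
        rwa [← hX.l_mul, ← hX.l_mul, inv_mul_cancel, hX.l_one, hX.l_one] at this
      · intro y
        exact ⟨lX a⁻¹ y, by rw [← hX.l_mul, mul_inv_cancel, hX.l_one]⟩
    refine ⟨⟨fun x => u.1 (lX a x), u.2.1.comp lXa_bij, ?_⟩, ?_, fun x => rfl⟩
    · intro x g
      show u.1 (lX a (rX x g)) = rY (u.1 (lX a x)) g
      rw [hX.comm, u.2.2]
    · intro x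
      obtain ⟨h, hh, hhe⟩ := (hcorrX x (lX a x)).mpr ⟨a, ha, rfl⟩
      have : Quot.mk (rightOrbitRel rX H) x = Quot.mk _ (lX a x) :=
        (mkX_eq _ _).mpr ⟨h, hh, hhe⟩
      calc e (Quot.mk _ x) = e (Quot.mk _ (lX a x)) := by rw [this]
        _ = Quot.mk _ (u.1 (lX a x)) := hu (lX a x)
  · -- transitivity of postcomposition
    intro u hu v hv
    obtain ⟨x₀⟩ := hX.nonempty
    have hsame : Quot.mk (rightOrbitRel rY H) (u.1 x₀) = Quot.mk _ (v.1 x₀) := by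
      rw [← hu x₀, ← hv x₀]
    obtain ⟨h, hh, hhe⟩ := (mkY_eq _ _).mp hsame
    obtain ⟨b, hb, hbe⟩ := (hcorrY (u.1 x₀) (v.1 x₀)).mp ⟨h, hh, hhe⟩
    refine ⟨b, hb, ?_⟩
    intro x
    obtain ⟨g, hg, -⟩ := hX.r_free_trans x₀ x
    calc v.1 x = v.1 (rX x₀ g) := by rw [hg]
      _ = rY (v.1 x₀) g := v.2.2 x₀ g
      _ = rY (lY b (u.1 x₀)) g := by rw [hbe]
      _ = lY b (rY (u.1 x₀) g) := (hY.comm b (u.1 x₀) g).symm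
      _ = lY b (u.1 (rX x₀ g)) := by rw [u.2.2]
      _ = lY b (u.1 x) := by rw [hg]
  · -- transitivity of precomposition
    intro u hu v hv
    obtain ⟨x₀⟩ := hX.nonempty
    have hsame : Quot.mk (rightOrbitRel rY H) (u.1 x₀) = Quot.mk _ (v.1 x₀) := by
      rw [← hu x₀, ← hv x₀]
    obtain ⟨h, hh, hhe⟩ := (mkY_eq _ _).mp hsame
    obtain ⟨a, ha, hae⟩ := (hcorrX x₀ (rX x₀ h)).mp ⟨h, hh, rfl⟩
    refine ⟨a, ha, ?_⟩
    intro x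
    obtain ⟨g, hg, -⟩ := hX.r_free_trans x₀ x
    calc v.1 x = v.1 (rX x₀ g) := by rw [hg]
      _ = rY (v.1 x₀) g := v.2.2 x₀ g
      _ = rY (rY (u.1 x₀) h) g := by rw [hhe]
      _ = rY (u.1 (rX x₀ h)) g := by rw [u.2.2]
      _ = rY (u.1 (lX a x₀)) g := by rw [hae]
      _ = u.1 (rX (lX a x₀) g) := (u.2.2 _ g).symm
      _ = u.1 (lX a (rX x₀ g)) := by rw [hX.comm]
      _ = u.1 (lX a x) := by rw [hg]
end
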